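/- Define c : ℕ → ℝ for n ≥ 3 by c(n) = r₁ⁿ + r₂ⁿ + (-1)ⁿ·(y-1), where r₁ = (x-1-√((x+1)²-4y))/2 and r₂ = (x-1+√((x+1)²-4y))/2, and let p : ℕ → ℝ satisfy p(0)=1, p(1)=x, p(n)=(x-1)p(n-1)+(x-y)p(n-2). Assume (x+1)²-4y ≥ 0. Then c(3) = x³ - 3xy + 2y and for all n ≥ 4, c(n) + c(n-1) = p(n) + (x-y)·p(n-2). -/

import Mathlib

/-!
The numbers `r₁, r₂` are the roots of `t² = (x - 1) t + (x - y)`, the characteristic equation of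
the recurrence defining `p`, so the power sums `q n = r₁ⁿ + r₂ⁿ` satisfy that recurrence as well,
with `q 0 = 2` and `q 1 = x - 1`. The alternating terms cancel in `c n + c (n - 1)`, which leaves
`q n + q (n - 1)`; this and `p n + (x - y) p (n - 2)` are both solutions of the recurrence in `n`,
and they agree at the first two indices.
-/

namespace LinearRecurrence

section CommSemiring

variable {R : Type*} [CommSemiring R]

def secondOrder (a b : R) : LinearRecurrence R := ⟨2, ![b, a]⟩

theorem isSolution_secondOrder_iff {a b : R} {u : ℕ → R} :
    (secondOrder a b).IsSolution u ↔ ∀ n, u (n + 2) = a * u (n + 1) + b * u n := by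
  change (∀ n, u (n + 2) = ∑ i : Fin 2, ![b, a] i * u (n + i)) ↔ _
  simp [Fin.sum_univ_two, add_comm (b * _)]

variable {E : LinearRecurrence R} {u v : ℕ → R}

theorem IsSolution.shift (hu : E.IsSolution u) (k : ℕ) : E.IsSolution (fun n ↦ u (n + k)) :=
  fun n ↦ by simpa only [add_right_comm] using hu (n + k)

theorem IsSolution.add (hu : E.IsSolution u) (hv : E.IsSolution v) : E.IsSolution (u + v) :=
  (is_sol_iff_mem_solSpace E _).mpr <|
    E.solSpace.add_mem ((is_sol_iff_mem_solSpace E u).mp hu) ((is_sol_iff_mem_solSpace E v).mp hv)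

theorem IsSolution.const_smul (hu : E.IsSolution u) (c : R) : E.IsSolution (c • u) :=
  (is_sol_iff_mem_solSpace E _).mpr <| E.solSpace.smul_mem c ((is_sol_iff_mem_solSpace E u).mp hu)

theorem isSolution_secondOrder_pow {a b r : R} (hr : r ^ 2 = a * r + b) :
    (secondOrder a b).IsSolution (r ^ ·) :=
  isSolution_secondOrder_iff.mpr fun n ↦ by rw [pow_add, hr]; ring

theorem eq_of_isSolution_secondOrder {a b : R} (hu : (secondOrder a b).IsSolution u)
    (hv : (secondOrder a b).IsSolution v) (h0 : u 0 = v 0) (h1 : u 1 = v 1) : u = v := by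
  refine ((secondOrder a b).eq_iff_eqOn_range_order u v hu hv).mpr fun n hn ↦ ?_
  have : n < 2 := Finset.mem_range.mp hn
  interval_cases n <;> assumption

theorem add_shift_eq_of_isSolution_secondOrder {a b : R} {q p : ℕ → R}
    (hq : (secondOrder a b).IsSolution q) (hp : (secondOrder a b).IsSolution p)
    (hq0 : q 0 = 2) (hq1 : q 1 = a) (hp0 : p 0 = 1) (hp1 : p 1 = a + 1) (n : ℕ) :
    q (n + 1) + q (n + 2) = p (n + 2) + b * p n := by
  have hq' := isSolution_secondOrder_iff.mp hq
  have hp' := isSolution_secondOrder_iff.mp hp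
  have hsum : (fun n ↦ q (n + 1) + q (n + 2)) = fun n ↦ p (n + 2) + b * p n := by
    refine eq_of_isSolution_secondOrder ((hq.shift 1).add (hq.shift 2))
      ((hp.shift 2).add (hp.const_smul b)) ?_ ?_
    · simp only [zero_add, hq' 0, hp' 0, hq0, hq1, hp0, hp1]
      ring
    · simp only [hq' 1, hq' 0, hp' 1, hp' 0, hq0, hq1, hp0, hp1]
      ring
  exact congrFun hsum n

end CommSemiring

end LinearRecurrence

theorem quadratic_root_of_sq_eq {K : Type*} [Field K] [NeZero (2 : K)] {a b s : K}
    (hs : s ^ 2 = a ^ 2 + 4 * b) : ((a + s) / 2) ^ 2 = a * ((a + s) / 2) + b := by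
  field_simp
  linear_combination hs

open LinearRecurrence

theorem cycle_closed_form_base_and_recurrence (x y : ℝ) (h : (x + 1)^2 - 4*y ≥ 0)
    (p : ℕ → ℝ) (hp0 : p 0 = 1) (hp1 : p 1 = x)
    (hrec : ∀ n, 2 ≤ n → p n = (x - 1) * p (n - 1) + (x - y) * p (n - 2))
    (c : ℕ → ℝ)
    (hc : ∀ n, 3 ≤ n → c n =
      ((x - 1 - Real.sqrt ((x + 1)^2 - 4*y)) / 2) ^ n +
      ((x - 1 + Real.sqrt ((x + 1)^2 - 4*y)) / 2) ^ n + (-1 : ℝ) ^ n * (y - 1)) :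
    c 3 = x^3 - 3*x*y + 2*y ∧
    ∀ n, 4 ≤ n → c n + c (n - 1) = p n + (x - y) * p (n - 2) := by
  set s := Real.sqrt ((x + 1)^2 - 4*y)
  have hs : s ^ 2 = (x - 1) ^ 2 + 4 * (x - y) := by rw [Real.sq_sqrt h]; ring
  have hr₁ : ((x - 1 - s) / 2) ^ 2 = (x - 1) * ((x - 1 - s) / 2) + (x - y) := by
    simpa only [← sub_eq_add_neg] using quadratic_root_of_sq_eq (s := -s) (by rwa [neg_sq])
  set q : ℕ → ℝ := fun n ↦ ((x - 1 - s) / 2) ^ n + ((x - 1 + s) / 2) ^ n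
  have hq : (secondOrder (x - 1) (x - y)).IsSolution q :=
    (isSolution_secondOrder_pow hr₁).add (isSolution_secondOrder_pow (quadratic_root_of_sq_eq hs))
  have hp : (secondOrder (x - 1) (x - y)).IsSolution p :=
    isSolution_secondOrder_iff.mpr fun n ↦ by simpa using hrec (n + 2) (by omega)
  have hq_p := add_shift_eq_of_isSolution_secondOrder hq hp (by norm_num [q])
    (by simp only [q, pow_one]; ring) hp0 (by rw [hp1]; ring)
  refine ⟨by rw [hc 3 le_rfl]; linear_combination (3 * (x - 1) / 4) * hs, fun n hn ↦ ?_⟩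
  obtain ⟨m, rfl⟩ := Nat.exists_eq_add_of_le' hn
  have hc_q : c (m + 4) + c (m + 3) = q (m + 3) + q (m + 4) := by
    rw [hc (m + 4) (by omega), hc (m + 3) (by omega)]
    ring
  rw [show m + 4 - 1 = m + 3 from rfl, show m + 4 - 2 = m + 2 from rfl, hc_q]
  exact hq_p (m + 2)
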